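/- arXiv:0909.3763 — 2 statements merged into one kernel-verified Lean document; each statement's English description precedes it below -/
import Mathlib

section
/- Let R be a ring, S a multiplicatively closed subset of R that is a left and right Ore set consisting of regular elements, and M a finitely generated left R-module. If the Ore localization R_S is a local ring whose maximal ideal is the localization of an ideal I of R, and if M/IM is S-torsion, then M_S = 0, i.e., M is S-torsion. -/
open OreLocalization

/-- In a local ring, nonunits are closed under right multiplication. -/
lemma stmt4.nonunit_mul {R : Type*} [Ring R] [IsLocalRing R] {a : R} (h : ¬IsUnit a) (r : R) :
    ¬IsUnit (a * r) := by
  intro hu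
  obtain ⟨u, hu'⟩ := hu
  have hab : a * (r * (↑u⁻¹ : R)) = 1 := by
    rw [← mul_assoc, ← hu', u.mul_inv]
  set b := r * (↑u⁻¹ : R) with hb
  rcases IsLocalRing.isUnit_or_isUnit_of_add_one (a := b * a) (b := 1 - b * a) (by abel) with hba | h1
  · have hid : (b * a) * (b * a) = b * a := by
      rw [mul_assoc, ← mul_assoc a b, hab, one_mul]
    obtain ⟨v, hv⟩ := hba
    have hvv : v * v = v := Units.ext (by rw [Units.val_mul, hv, hid])
    have hv1 : v = 1 := mul_left_cancel (hvv.trans (mul_one v).symm)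
    have hone : b * a = 1 := by rw [← hv, hv1, Units.val_one]
    exact h ⟨⟨a, b, hab, hone⟩, rfl⟩
  · have h0 : a * (1 - b * a) = 0 := by
      rw [mul_sub, mul_one, ← mul_assoc, hab, one_mul, sub_self]
    obtain ⟨v, hv⟩ := h1
    have ha0 : a = 0 := by
      have : a * ((↑v : R) * (↑v⁻¹ : R)) = 0 * (↑v⁻¹ : R) := by
        rw [← mul_assoc, hv, h0]
      rwa [v.mul_inv, mul_one, zero_mul] at this
    have h01 : (0 : R) = 1 := by rw [← hab, ha0, zero_mul]
    exact h (by rw [ha0, h01]; exact isUnit_one)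

lemma stmt4.rep {R M : Type*} [Ring R] [AddCommGroup M] [Module R M] (J : Ideal R)
    (hJr : ∀ a ∈ J, ∀ r : R, a * r ∈ J) (T : Finset M) {x : M}
    (hx : x ∈ J • Submodule.span R (T : Set M)) :
    ∃ a : M → R, (∀ i, a i ∈ J) ∧ ∑ i ∈ T, a i • i = x := by
  refine Submodule.smul_induction_on hx ?_ ?_
  · intro a ha n hn
    obtain ⟨c, -, hc⟩ := Submodule.mem_span_finset.mp hn
    refine ⟨fun i => a * c i, fun i => hJr a ha _, ?_⟩
    calc ∑ i ∈ T, (a * c i) • i = a • ∑ i ∈ T, c i • i := by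
          rw [Finset.smul_sum]; exact Finset.sum_congr rfl fun i _ => (mul_smul a (c i) i)
      _ = a • n := by rw [hc]
  · rintro x y ⟨ax, haxJ, haxs⟩ ⟨ay, hayJ, hays⟩
    exact ⟨fun i => ax i + ay i, fun i => J.add_mem (haxJ i) (hayJ i), by
      simp only [add_smul, Finset.sum_add_distrib, haxs, hays]⟩

/-- Nakayama for possibly noncommutative rings. -/
lemma stmt4.nak {R M : Type*} [Ring R] [AddCommGroup M] [Module R M] (J : Ideal R)
    (hJr : ∀ a ∈ J, ∀ r : R, a * r ∈ J) (hJu : ∀ a ∈ J, IsUnit (1 - a))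
    (hle : ∀ x : M, x ∈ J • (⊤ : Submodule R M)) :
    ∀ T : Finset M, Submodule.span R (T : Set M) = ⊤ → ∀ x : M, x = 0 := by
  classical
  intro T
  induction T using Finset.strongInduction with
  | _ T ih =>
    intro hT x
    rcases T.eq_empty_or_nonempty with rfl | ⟨y, hy⟩
    · rw [Finset.coe_empty, Submodule.span_empty] at hT
      have : x ∈ (⊥ : Submodule R M) := hT.ge (Submodule.mem_top (x := x))
      simpa using this
    · have hxJ : y ∈ J • Submodule.span R (T : Set M) := by rw [hT]; exact hle y
      obtain ⟨a, haJ, hsum⟩ := stmt4.rep J hJr T hxJ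
      rw [← Finset.add_sum_erase _ _ hy] at hsum
      have h1 : (1 - a y) • y = ∑ i ∈ T.erase y, a i • i := by
        rw [sub_smul, one_smul]
        exact (eq_sub_of_add_eq' hsum).symm
      obtain ⟨u, hu⟩ := hJu _ (haJ y)
      have hyspan : y ∈ Submodule.span R ((T.erase y : Finset M) : Set M) := by
        have hmem : (1 - a y) • y ∈ Submodule.span R ((T.erase y : Finset M) : Set M) := by
          rw [h1]
          exact Submodule.sum_mem _ fun i hi =>
            Submodule.smul_mem _ _ (Submodule.subset_span (Finset.mem_coe.mpr hi))
        have := Submodule.smul_mem _ ((↑u⁻¹ : R)) hmem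
        rwa [smul_smul, ← hu, u.inv_mul, one_smul] at this
      have hT' : Submodule.span R ((T.erase y : Finset M) : Set M) = ⊤ := by
        rw [eq_top_iff, ← hT, Submodule.span_le]
        intro z hz
        by_cases hzy : z = y
        · subst hzy; exact hyspan
        · exact Submodule.subset_span (Finset.mem_coe.mpr (Finset.mem_erase.mpr ⟨hzy, hz⟩))
      exact ih (T.erase y) (Finset.erase_ssubset hy) hT' x

/-- Let `R` be a ring, `S` a multiplicatively closed subset of `R` that is a left and right
Ore set consisting of regular elements, and `M` a finitely generated left `R`-module.
If the Ore localization `R_S` is a local ring whose maximal ideal is the localization of an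
ideal `I` of `R`, and if `M/IM` is `S`-torsion, then `M_S = 0`, i.e. `M` is `S`-torsion. -/
theorem stmt4 (R : Type*) [Ring R] (S : Submonoid R) [OreLocalization.OreSet S]
    -- right Ore condition as well ("left and right Ore set"):
    (hro : ∀ (x : R) (s : S), ∃ (x' : R) (s' : S), x * (s' : R) = (s : R) * x')
    (hreg : ∀ t ∈ S, IsLeftRegular t ∧ IsRightRegular t)
    (M : Type*) [AddCommGroup M] [Module R M] [Module.Finite R M]
    (I : Ideal R)
    [hloc : IsLocalRing (R[S⁻¹])]
    -- the maximal ideal (= set of nonunits) of the local ring `R_S` is the localization of `I`: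
    (hmax : {x : R[S⁻¹] | ¬ IsUnit x} =
      (Ideal.span ((numeratorRingHom : R →+* R[S⁻¹]) '' (I : Set R)) : Set (R[S⁻¹])))
    (htors : ∀ x : M ⧸ (I • (⊤ : Submodule R M)), ∃ t ∈ S, t • x = 0) :
    Subsingleton (M[S⁻¹]) := by
  set J : Ideal (R[S⁻¹]) := Ideal.span ((numeratorRingHom : R →+* R[S⁻¹]) '' (I : Set R)) with hJdef
  have hJiff : ∀ a : R[S⁻¹], ¬ IsUnit a ↔ a ∈ J := fun a => by
    simpa using (Set.ext_iff.mp hmax a)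
  have hJr : ∀ a ∈ J, ∀ r : R[S⁻¹], a * r ∈ J := fun a ha r =>
    (hJiff _).mp (stmt4.nonunit_mul ((hJiff a).mpr ha) r)
  have hJu : ∀ a ∈ J, IsUnit (1 - a) := fun a ha => by
    rcases IsLocalRing.isUnit_or_isUnit_of_add_one (a := a) (b := 1 - a) (by abel) with h | h
    · exact absurd h ((hJiff a).mpr ha)
    · exact h
  -- every m /ₒ 1 lies in J • ⊤
  have himg : ∀ x ∈ I • (⊤ : Submodule R M),
      (x /ₒ (1 : S) : M[S⁻¹]) ∈ J • (⊤ : Submodule (R[S⁻¹]) (M[S⁻¹])) := by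
    intro x hx
    refine Submodule.smul_induction_on hx ?_ ?_
    · intro a ha n _
      have heq : ((a • n : M) /ₒ (1 : S) : M[S⁻¹]) = ((a /ₒ (1 : S) : R[S⁻¹])) • (n /ₒ (1 : S)) := by
        rw [smul_div_one]
      rw [heq]
      exact Submodule.smul_mem_smul (Ideal.subset_span ⟨a, ha, rfl⟩) Submodule.mem_top
    · intro x y hx hy
      have heq : ((x + y : M) /ₒ (1 : S) : M[S⁻¹]) = x /ₒ (1 : S) + y /ₒ (1 : S) := add_oreDiv.symm
      rw [heq]
      exact Submodule.add_mem _ hx hy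
  have h0 : ∀ m : M, (m /ₒ (1 : S) : M[S⁻¹]) ∈ J • (⊤ : Submodule (R[S⁻¹]) (M[S⁻¹])) := by
    intro m
    obtain ⟨t, htS, ht⟩ := htors (Submodule.Quotient.mk m)
    have htm : t • m ∈ I • (⊤ : Submodule R M) := by
      rw [← Submodule.Quotient.mk_eq_zero]
      rw [Submodule.Quotient.mk_smul]
      exact ht
    have hrw : (m /ₒ (1 : S) : M[S⁻¹]) = ((1 : R) /ₒ (⟨t, htS⟩ : S)) • ((t • m) /ₒ (1 : S)) := by
      rw [smul_div_one, one_smul]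
      calc (m /ₒ (1 : S) : M[S⁻¹]) = (⟨t, htS⟩ : S) • m /ₒ ((⟨t, htS⟩ : S) * 1) :=
            OreLocalization.expand' m 1 ⟨t, htS⟩
        _ = (t • m) /ₒ (⟨t, htS⟩ : S) := by rw [mul_one]; rfl
    rw [hrw]
    exact Submodule.smul_mem _ _ (himg _ htm)
  have hsmul : ∀ x : M[S⁻¹], x ∈ J • (⊤ : Submodule (R[S⁻¹]) (M[S⁻¹])) := by
    intro x
    induction x using OreLocalization.ind with
    | _ r s =>
      have hrw : (r /ₒ s : M[S⁻¹]) = ((1 : R) /ₒ s) • (r /ₒ (1 : S)) := by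
        rw [smul_div_one, one_smul]
      rw [hrw]
      exact Submodule.smul_mem _ _ (h0 r)
  -- finite generation of M[S⁻¹] over R[S⁻¹]
  obtain ⟨T, hT⟩ := Module.Finite.fg_top (R := R) (M := M)
  classical
  set T' : Finset (M[S⁻¹]) := T.image (fun m => m /ₒ (1 : S)) with hT'def
  have hspan1 : ∀ m : M, (m /ₒ (1 : S) : M[S⁻¹]) ∈ Submodule.span (R[S⁻¹]) (T' : Set (M[S⁻¹])) := by
    intro m
    have hm : m ∈ Submodule.span R (T : Set M) := hT ▸ Submodule.mem_top
    induction hm using Submodule.span_induction with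
    | mem n hn => exact Submodule.subset_span (Finset.mem_coe.mpr (Finset.mem_image_of_mem _ hn))
    | zero =>
      have : ((0 : M) /ₒ (1 : S) : M[S⁻¹]) = 0 := zero_oreDiv _
      rw [this]; exact Submodule.zero_mem _
    | add x y _ _ hx hy =>
      have : ((x + y : M) /ₒ (1 : S) : M[S⁻¹]) = x /ₒ (1 : S) + y /ₒ (1 : S) := add_oreDiv.symm
      rw [this]; exact Submodule.add_mem _ hx hy
    | smul r n _ hn =>
      have : ((r • n : M) /ₒ (1 : S) : M[S⁻¹]) = ((r /ₒ (1 : S) : R[S⁻¹])) • (n /ₒ (1 : S)) := by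
        rw [smul_div_one]
      rw [this]; exact Submodule.smul_mem _ _ hn
  have hTtop : Submodule.span (R[S⁻¹]) (T' : Set (M[S⁻¹])) = ⊤ := by
    rw [eq_top_iff]
    intro x _
    induction x using OreLocalization.ind with
    | _ r s =>
      have hrw : (r /ₒ s : M[S⁻¹]) = ((1 : R) /ₒ s) • (r /ₒ (1 : S)) := by
        rw [smul_div_one, one_smul]
      rw [hrw]
      exact Submodule.smul_mem _ _ (hspan1 r)
  have hzero := stmt4.nak J hJr hJu hsmul T' hTtop
  exact ⟨fun a b => by rw [hzero a, hzero b]⟩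
end

section
/- Let G be a group isomorphic to a semidirect product Z_p^d ⋊ Z_p where the generator g of the complement acts on H ≅ Z_p^d by an automorphism whose minimal polynomial p(t) factors as (t−1)^r q(t) with q coprime to (t−1) and q nonconstant. Then the closed subgroup K = ⟨ker q(g), g⟩ satisfies: the centralizer of g in K has dimension 1 as a p-adic Lie group. -/
open Polynomial SemidirectProduct


-- eigenvector lemma
lemma aux_eigen {R M : Type*} [CommRing R] [AddCommGroup M] [Module R M]
    (f : Module.End R M) (x : M) (hx : f x = x) (q : R[X]) :
    (aeval f q) x = q.eval 1 • x := by
  induction q using Polynomial.induction_on with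
  | C a => simp [Module.algebraMap_end_apply]
  | add p q hp hq => simp [hp, hq, add_smul]
  | monomial n a ih =>
      have hpow : ∀ k : ℕ, (f ^ k) x = x := by
        intro k; induction k with
        | zero => simp
        | succ k ih => rw [pow_succ, Module.End.mul_apply, hx, ih]
      simp [aeval_mul, aeval_C, Module.algebraMap_end_apply, hpow, mul_smul]

section
variable {R M : Type*} [CommRing R] [AddCommGroup M] [Module R M]
  (z : M ≃ₗ[R] M) (q : R[X])

lemma aux_comm : (z : Module.End R M) * aeval (z : Module.End R M) q
    = aeval (z : Module.End R M) q * (z : Module.End R M) := by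
  have h2 := congrArg (aeval (z : Module.End R M)) (mul_comm X q)
  simpa [map_mul, aeval_X] using h2

lemma aux_ker_z {x : M} (hx : x ∈ LinearMap.ker (aeval (z : Module.End R M) q)) :
    z x ∈ LinearMap.ker (aeval (z : Module.End R M) q) := by
  rw [LinearMap.mem_ker] at hx ⊢
  have := congrArg (fun f : Module.End R M => f x) (aux_comm z q)
  simp only [Module.End.mul_apply] at this
  rw [hx] at this
  simpa using this.symm

lemma aux_ker_zsymm {x : M} (hx : x ∈ LinearMap.ker (aeval (z : Module.End R M) q)) :
    z.symm x ∈ LinearMap.ker (aeval (z : Module.End R M) q) := by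
  rw [LinearMap.mem_ker] at hx ⊢
  have h := congrArg (fun f : Module.End R M => f (z.symm x)) (aux_comm z q)
  simp only [Module.End.mul_apply] at h
  have h2 : (z : Module.End R M) (z.symm x) = x := z.apply_symm_apply x
  rw [h2, hx] at h
  -- h : z ((aeval z q) (z.symm x)) = 0
  exact z.injective (by simpa using h)
end

section
variable {R M : Type*} [CommRing R] [AddCommGroup M] [Module R M]
  (z : M ≃ₗ[R] M) (q : R[X])

lemma aux_zpow (m : ℤ) : ∀ x ∈ LinearMap.ker (aeval (z : Module.End R M) q),
    Multiplicative.toAdd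
      (((AddEquiv.toMultiplicative z.toAddEquiv : MulAut (Multiplicative M)) ^ m)
        (Multiplicative.ofAdd x)) ∈ LinearMap.ker (aeval (z : Module.End R M) q) := by
  induction m using Int.induction_on with
  | zero => intro x hx; simpa using hx
  | succ k ih =>
      intro x hx
      rw [zpow_add_one, MulAut.mul_apply]
      have he : (AddEquiv.toMultiplicative z.toAddEquiv : MulAut (Multiplicative M))
          (Multiplicative.ofAdd x) = Multiplicative.ofAdd (z x) := rfl
      rw [he]
      exact ih (z x) (aux_ker_z z q hx)
  | pred k ih =>
      intro x hx
      rw [zpow_sub_one, MulAut.mul_apply]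
      have he : (AddEquiv.toMultiplicative z.toAddEquiv : MulAut (Multiplicative M))⁻¹
          (Multiplicative.ofAdd x) = Multiplicative.ofAdd (z.symm x) := rfl
      rw [he]
      exact ih (z.symm x) (aux_ker_zsymm z q hx)
end

/-- Let `G ≅ ℤ_p^d ⋊ ℤ_p` be a semidirect product in which the generator `g` of the
complement acts on `H = ℤ_p^d` by an automorphism `z` whose minimal polynomial factors as
`(t−1)^r q(t)` with `q` coprime to `(t−1)` and `q` nonconstant.  Then the subgroup
`K = ⟨ker q(g), g⟩` satisfies: the centralizer of `g` in `K` has dimension `1` as a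
`p`-adic Lie group.  (Dimension `1` is encoded by: the part of the centralizer lying in the
`d`-dimensional factor `H` is finite, while the centralizer still contains the
one-parameter (`1`-dimensional) subgroup `⟨g⟩ ≅ ℤ_p`.) -/
theorem stmt12 (p : ℕ) [Fact p.Prime] (d : ℕ)
    (z : (Fin d → ℤ_[p]) ≃ₗ[ℤ_[p]] (Fin d → ℤ_[p]))
    (φ : Multiplicative ℤ_[p] →* MulAut (Multiplicative (Fin d → ℤ_[p])))
    (hφ : φ (Multiplicative.ofAdd (1 : ℤ_[p])) = AddEquiv.toMultiplicative z.toAddEquiv)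
    (r : ℕ) (q : Polynomial ℤ_[p])
    (hmin : minpoly ℤ_[p] (z : Module.End ℤ_[p] (Fin d → ℤ_[p])) = (X - 1) ^ r * q)
    (hq : IsCoprime (q.map (algebraMap ℤ_[p] ℚ_[p])) (X - 1))
    (hqnc : 0 < q.natDegree)
    (g : (Multiplicative (Fin d → ℤ_[p])) ⋊[φ] (Multiplicative ℤ_[p]))
    (hg : g = inr (Multiplicative.ofAdd (1 : ℤ_[p]))) :
    ∀ K : Subgroup ((Multiplicative (Fin d → ℤ_[p])) ⋊[φ] (Multiplicative ℤ_[p])),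
      K = Subgroup.closure
        ({y | ∃ x ∈ LinearMap.ker (Polynomial.aeval
            (z : Module.End ℤ_[p] (Fin d → ℤ_[p])) q),
          y = inl (Multiplicative.ofAdd x)} ∪ {g}) →
      -- the `H`-part of the centralizer of `g` in `K` is finite …
      {x : Fin d → ℤ_[p] |
          inl (Multiplicative.ofAdd x) ∈ K ⊓ Subgroup.centralizer {g}}.Finite ∧
      -- … while `g` generates a `1`-dimensional subgroup of that centralizer;
      -- hence the centralizer of `g` in `K` has dimension `1`.
      g ∈ K ⊓ Subgroup.centralizer {g} := by
  
  intro K hK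
  set N := LinearMap.ker (Polynomial.aeval (z : Module.End ℤ_[p] (Fin d → ℤ_[p])) q) with hN
  -- the subgroup bounding K
  let S : Subgroup ((Multiplicative (Fin d → ℤ_[p])) ⋊[φ] (Multiplicative ℤ_[p])) :=
    { carrier := {a | Multiplicative.toAdd a.left ∈ N ∧
        a.right ∈ Subgroup.zpowers (Multiplicative.ofAdd (1 : ℤ_[p]))}
      one_mem' := ⟨by simpa using N.zero_mem, one_mem _⟩
      mul_mem' := by
        rintro a b ⟨ha1, ha2⟩ ⟨hb1, hb2⟩
        refine ⟨?_, ?_⟩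
        · rw [mul_left, toAdd_mul]
          refine N.add_mem ha1 ?_
          obtain ⟨m, hm⟩ := ha2
          rw [← hm, map_zpow, hφ]
          simpa [hN] using aux_zpow z q m (Multiplicative.toAdd b.left) hb1
        · rw [mul_right]; exact mul_mem ha2 hb2
      inv_mem' := by
        rintro a ⟨ha1, ha2⟩
        refine ⟨?_, ?_⟩
        · rw [inv_left]
          obtain ⟨m, hm⟩ := inv_mem ha2
          rw [← hm, map_zpow, hφ]
          have hl : Multiplicative.toAdd (a.left⁻¹) ∈ N := by
            rw [toAdd_inv]; exact N.neg_mem ha1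
          simpa [hN] using aux_zpow z q m (Multiplicative.toAdd (a.left⁻¹)) hl
        · rw [inv_right]; exact inv_mem ha2 }
  have hKS : K ≤ S := by
    rw [hK]
    refine Subgroup.closure_le S |>.mpr (Set.union_subset ?_ ?_)
    · rintro y ⟨x, hx, rfl⟩
      refine ⟨by simpa using hx, ?_⟩
      rw [right_inl]; exact one_mem _
    · rintro y rfl
      refine ⟨?_, ?_⟩
      · rw [hg, left_inr]; simpa using N.zero_mem
      · rw [hg, right_inr]; exact Subgroup.mem_zpowers _
  have hq1 : q.eval 1 ≠ 0 := by
    obtain ⟨u, v, huv⟩ := hq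
    intro h0
    have := congrArg (Polynomial.eval (1 : ℚ_[p])) huv
    simp [Polynomial.eval_map, Polynomial.eval₂_at_one, h0] at this
  constructor
  · refine Set.Finite.subset (Set.finite_singleton (0 : Fin d → ℤ_[p])) ?_
    intro x hx
    obtain ⟨hxK, hxC⟩ := hx
    have hker : x ∈ N := by simpa using (hKS hxK).1
    have hcomm := Subgroup.mem_centralizer_iff.mp hxC g (Set.mem_singleton g)
    have hleft := congrArg SemidirectProduct.left hcomm
    rw [hg] at hleft
    simp only [mul_left, left_inl, left_inr, right_inl, right_inr, hφ, one_mul,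
      map_one, MulAut.one_apply, mul_one] at hleft
    have hz : z x = x := by
      have : Multiplicative.ofAdd (z x) = Multiplicative.ofAdd x := hleft
      simpa using this
    have h1 := aux_eigen (z : Module.End ℤ_[p] (Fin d → ℤ_[p])) x hz q
    rw [LinearMap.mem_ker] at hker
    rw [hker] at h1
    have hx0 : x = 0 := by
      rcases smul_eq_zero.mp h1.symm with h | h
      · exact absurd h hq1
      · exact h
    simpa using hx0
  · refine ⟨?_, ?_⟩
    · rw [hK]; exact Subgroup.subset_closure (Or.inr rfl)
    · refine Subgroup.mem_centralizer_iff.mpr ?_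
      rintro h hh
      rw [Set.mem_singleton_iff] at hh
      rw [hh]
end
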